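/- (Claim 3, empty case) Let d ≥ 0, k ≥ 0, m ≥ 0 and n₁ ≥ 1, n₂ ≥ 1 be integers. Define S = max(0, v(d, k+1, n₁)) + n₁·max(0, v(k−1, m, n₂)) + max(0, max(0, v(d, k, n₁)) − max(0, v(d, k+1, n₁)) + n₁·(max(0, v(k, m, n₂)) − max(0, v(k−1, m, n₂))) − n₁(k+1)). If all three inequalities hold: (a) v(d, k+1, n₁) ≤ 0; (b) v(k−1, m, n₂) ≤ 0; (c) d(d+3)/2 + 1 − n₁n₂·m(m+1)/2 ≤ 0; then S = 0. -/

import Mathlib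

/-! Under (a) and (b) the first two summands of `S` vanish, and since raising the multiplicity
from `k` to `k + 1` costs `n₁ (k + 1)` conditions while raising the degree from `k - 1` to `k`
gains `k + 1`, the last summand is `max 0 (A⁺ + n₁ B⁺ - n₁ (k + 1))` with
`A = v(d, k, n₁) ≤ n₁ (k + 1)` and `B = v(k, m, n₂) ≤ k + 1`. Moreover `A + n₁ B` equals the
left side of (c) plus `n₁ (k + 1)`, so each of `0`, `A`, `n₁ B`, `A + n₁ B` is at most
`n₁ (k + 1)`, and the last summand vanishes too. -/

/-- The virtual dimension `v(δ, μ, ν) = δ(δ+3)/2 + 1 − ν·μ(μ+1)/2` (as a rational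
number) of the vector space associated with the homogeneous linear system
`L_δ(μ^ν)`. -/
def vdim (δ : ℤ) (μ ν : ℕ) : ℚ :=
  (δ : ℚ) * ((δ : ℚ) + 3) / 2 + 1 - (ν : ℚ) * ((μ : ℚ) * ((μ : ℚ) + 1)) / 2

theorem max_zero_add_mul_max_zero_le {α : Type*} [Semiring α] [LinearOrder α]
    [IsOrderedRing α] {x y t c : α} (hc : 0 ≤ c) (hx : x ≤ c) (hy : t * y ≤ c)
    (hxy : x + t * y ≤ c) : max 0 x + t * max 0 y ≤ c := by
  rcases le_total x 0 with hx₀ | hx₀ <;> rcases le_total y 0 with hy₀ | hy₀ <;>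
    simp [*]

theorem vdim_eq_vdim_succ_add (δ : ℤ) (μ ν : ℕ) :
    vdim δ μ ν = vdim δ (μ + 1) ν + ν * (μ + 1) := by
  simp only [vdim]
  push_cast
  ring

theorem vdim_eq_vdim_sub_one_add (δ : ℤ) (μ ν : ℕ) :
    vdim δ μ ν = vdim (δ - 1) μ ν + (δ + 1) := by
  simp only [vdim]
  push_cast
  ring

theorem vdim_add_mul_vdim (d k m n₁ n₂ : ℕ) :
    vdim d k n₁ + n₁ * vdim k m n₂
      = (d : ℚ) * ((d : ℚ) + 3) / 2 + 1 - (n₁ : ℚ) * (n₂ : ℚ) * ((m : ℚ) * ((m : ℚ) + 1)) / 2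
        + n₁ * (k + 1) := by
  simp only [vdim]
  push_cast
  ring

theorem claim3_empty_general (d k m n₁ n₂ : ℕ)
    (S : ℚ)
    (hS : S = max 0 (vdim d (k + 1) n₁) + (n₁ : ℚ) * max 0 (vdim ((k : ℤ) - 1) m n₂)
      + max 0 (max 0 (vdim d k n₁) - max 0 (vdim d (k + 1) n₁)
          + (n₁ : ℚ) * (max 0 (vdim k m n₂) - max 0 (vdim ((k : ℤ) - 1) m n₂))
          - (n₁ : ℚ) * ((k : ℚ) + 1)))
    (ha : vdim d (k + 1) n₁ ≤ 0)
    (hb : vdim ((k : ℤ) - 1) m n₂ ≤ 0)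
    (hc : (d : ℚ) * ((d : ℚ) + 3) / 2 + 1
      - (n₁ : ℚ) * (n₂ : ℚ) * ((m : ℚ) * ((m : ℚ) + 1)) / 2 ≤ 0) :
    S = 0 := by
  have hA := vdim_eq_vdim_succ_add d k n₁
  have hB : vdim k m n₂ = vdim ((k : ℤ) - 1) m n₂ + (k + 1) := by
    simpa using vdim_eq_vdim_sub_one_add k m n₂
  have hn₁ : (0 : ℚ) ≤ n₁ := n₁.cast_nonneg
  have key : max 0 (vdim d k n₁) + n₁ * max 0 (vdim k m n₂) ≤ n₁ * (k + 1) :=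
    max_zero_add_mul_max_zero_le (by positivity) (by linarith)
      (mul_le_mul_of_nonneg_left (by linarith) hn₁) (by linarith [vdim_add_mul_vdim d k m n₁ n₂])
  rw [hS, max_eq_left ha, max_eq_left hb, max_eq_left (by linarith)]
  ring

/-- **Claim 3, empty case.** The dimension `S` of the limit system `L₀`
(kernels plus intersection of images) vanishes when all of the inequalities
(a), (b), (c) hold. -/
theorem claim3_empty (d k m n₁ n₂ : ℕ) (hn₁ : 1 ≤ n₁) (hn₂ : 1 ≤ n₂)
    (S : ℚ)
    (hS : S = max 0 (vdim d (k + 1) n₁) + (n₁ : ℚ) * max 0 (vdim ((k : ℤ) - 1) m n₂)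
      + max 0 (max 0 (vdim d k n₁) - max 0 (vdim d (k + 1) n₁)
          + (n₁ : ℚ) * (max 0 (vdim k m n₂) - max 0 (vdim ((k : ℤ) - 1) m n₂))
          - (n₁ : ℚ) * ((k : ℚ) + 1)))
    (ha : vdim d (k + 1) n₁ ≤ 0)
    (hb : vdim ((k : ℤ) - 1) m n₂ ≤ 0)
    (hc : (d : ℚ) * ((d : ℚ) + 3) / 2 + 1
      - (n₁ : ℚ) * (n₂ : ℚ) * ((m : ℚ) * ((m : ℚ) + 1)) / 2 ≤ 0) :
    S = 0 :=
  claim3_empty_general d k m n₁ n₂ S hS ha hb hc
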